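/- arXiv:1402.2358 — 2 statements merged into one kernel-verified Lean document; each statement's English description precedes it below -/
import Mathlib

section
/- If ℓ ≥ 0 and n ≥ k ≥ m are nonnegative integers with k ≥ n−k and m ≥ n−m, then c_{ℓ+k} c_{ℓ+n−k} ≥ c_{ℓ+m} c_{ℓ+n−m}. -/
/-!
The integrands `P n x = x (x + 1) ⋯ (x + n - 1)` satisfy `P (n + 1) ^ 2 ≤ P n * P (n + 2)` for
`x ≥ 0`, so by Cauchy–Schwarz (proved through the discriminant of `t ↦ ∫ (t² f - 2 t h + g)`) the
sequence `c n` is log-convex. For a positive log-convex sequence the ratios `c (j + 1) / c j`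
increase, hence `c (i + d) * c j ≤ c i * c (j + d)` whenever `i ≤ j`; the theorem is the case
`i = ℓ + (n - k)`, `j = ℓ + m`, `d = k - m`.
-/

open MeasureTheory Real Nat

noncomputable def cauchy2 (n : ℕ) : ℝ :=
  ∫ x in (0:ℝ)..1, ∏ i ∈ Finset.range n, (x + i)

theorem quadratic_nonneg_of_sq_le_mul {a b c : ℝ} (ha : 0 ≤ a) (hc : 0 ≤ c) (hb : b ^ 2 ≤ a * c)
    (t : ℝ) : 0 ≤ a * (t * t) + -2 * b * t + c := by
  rcases ha.eq_or_lt with rfl | ha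
  · obtain rfl : b = 0 := by nlinarith
    simpa using hc
  · refine nonneg_of_mul_nonneg_right ?_ ha
    nlinarith [sq_nonneg (a * t - b)]

theorem sq_integral_le_integral_mul_integral {α : Type*} [MeasurableSpace α] {μ : Measure α}
    {f g h : α → ℝ} (hf : Integrable f μ) (hg : Integrable g μ) (hh : Integrable h μ)
    (hf0 : 0 ≤ᵐ[μ] f) (hg0 : 0 ≤ᵐ[μ] g) (hfg : ∀ᵐ x ∂μ, h x ^ 2 ≤ f x * g x) :
    (∫ x, h x ∂μ) ^ 2 ≤ (∫ x, f x ∂μ) * ∫ x, g x ∂μ := by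
  have hquad (t : ℝ) :
      0 ≤ (∫ x, f x ∂μ) * (t * t) + (-2 * ∫ x, h x ∂μ) * t + ∫ x, g x ∂μ := by
    have hint : ∫ x, (f x * (t * t) + -2 * h x * t + g x) ∂μ
        = (∫ x, f x ∂μ) * (t * t) + (-2 * ∫ x, h x ∂μ) * t + ∫ x, g x ∂μ := by
      rw [integral_add (f := fun x => f x * (t * t) + -2 * h x * t)
          ((hf.mul_const _).add ((hh.const_mul _).mul_const _)) hg,
        integral_add (hf.mul_const _) ((hh.const_mul _).mul_const _),
        integral_mul_const, integral_mul_const, integral_const_mul]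
    rw [← hint]
    refine integral_nonneg_of_ae ?_
    filter_upwards [hf0, hg0, hfg] with x hfx hgx hx
    exact quadratic_nonneg_of_sq_le_mul hfx hgx hx t
  have := discrim_le_zero hquad
  rw [discrim] at this
  linarith

section LogConvex

variable {f : ℕ → ℝ}

theorem succ_mul_le_mul_succ_of_logConvex (hpos : ∀ n, 0 < f n)
    (hlc : ∀ n, f (n + 1) ^ 2 ≤ f n * f (n + 2)) {p q : ℕ} (hpq : p ≤ q) :
    f (p + 1) * f q ≤ f p * f (q + 1) := by
  induction q, hpq using Nat.le_induction with
  | base => rw [mul_comm]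
  | succ q _ ih =>
    refine le_of_mul_le_mul_right ?_ (hpos (q + 1))
    calc f (p + 1) * f (q + 1) * f (q + 1) = f (p + 1) * f (q + 1) ^ 2 := by ring
      _ ≤ f (p + 1) * (f q * f (q + 2)) := mul_le_mul_of_nonneg_left (hlc q) (hpos _).le
      _ = f (p + 1) * f q * f (q + 2) := by ring
      _ ≤ f p * f (q + 1) * f (q + 2) := mul_le_mul_of_nonneg_right ih (hpos _).le
      _ = f p * f (q + 2) * f (q + 1) := by ring

theorem add_mul_le_mul_add_of_logConvex (hpos : ∀ n, 0 < f n)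
    (hlc : ∀ n, f (n + 1) ^ 2 ≤ f n * f (n + 2)) {i j : ℕ} (hij : i ≤ j) (d : ℕ) :
    f (i + d) * f j ≤ f i * f (j + d) := by
  induction d with
  | zero => rfl
  | succ d ih =>
    have hstep := succ_mul_le_mul_succ_of_logConvex hpos hlc (show i + d ≤ j + d by omega)
    refine le_of_mul_le_mul_right ?_ (mul_pos (hpos (i + d)) (hpos (j + d)))
    calc f (i + d + 1) * f j * (f (i + d) * f (j + d))
        = f (i + d + 1) * f (j + d) * (f (i + d) * f j) := by ring
      _ ≤ f (i + d) * f (j + d + 1) * (f i * f (j + d)) :=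
        mul_le_mul hstep ih (mul_pos (hpos _) (hpos _)).le (mul_pos (hpos _) (hpos _)).le
      _ = f i * f (j + d + 1) * (f (i + d) * f (j + d)) := by ring

end LogConvex

theorem continuous_prod_range_add_natCast (n : ℕ) :
    Continuous fun x : ℝ => ∏ i ∈ Finset.range n, (x + i) :=
  continuous_finsetProd _ fun _ _ => continuous_id.add continuous_const

theorem sq_prod_range_succ_le {x : ℝ} (hx : 0 ≤ x) (n : ℕ) :
    (∏ i ∈ Finset.range (n + 1), (x + i)) ^ 2
      ≤ (∏ i ∈ Finset.range n, (x + i)) * ∏ i ∈ Finset.range (n + 2), (x + i) := by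
  have hP : 0 ≤ ∏ i ∈ Finset.range n, (x + i) := Finset.prod_nonneg fun i _ => by positivity
  simp only [Finset.prod_range_succ, Nat.cast_add, Nat.cast_one]
  have : (x + n) * (x + n) ≤ (x + n) * (x + (n + 1)) := by gcongr; linarith
  nlinarith [mul_le_mul_of_nonneg_left this (mul_nonneg hP hP)]

theorem cauchy2_pos (n : ℕ) : 0 < cauchy2 n :=
  intervalIntegral.intervalIntegral_pos_of_pos_on
    ((continuous_prod_range_add_natCast n).intervalIntegrable 0 1)
    (fun _ hx => Finset.prod_pos fun i _ => by have := hx.1; positivity) zero_lt_one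

theorem sq_cauchy2_succ_le (n : ℕ) : cauchy2 (n + 1) ^ 2 ≤ cauchy2 n * cauchy2 (n + 2) := by
  simp only [cauchy2, intervalIntegral.integral_of_le zero_le_one]
  have hint (m : ℕ) : IntegrableOn (fun x : ℝ => ∏ i ∈ Finset.range m, (x + i)) (Set.Ioc 0 1) :=
    (continuous_prod_range_add_natCast m).integrableOn_Ioc
  have hnonneg (m : ℕ) : ∀ᵐ x ∂volume.restrict (Set.Ioc (0 : ℝ) 1),
      0 ≤ ∏ i ∈ Finset.range m, (x + (i : ℝ)) :=
    ae_restrict_of_forall_mem measurableSet_Ioc fun x hx =>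
      Finset.prod_nonneg fun i _ => by have := hx.1.le; positivity
  exact sq_integral_le_integral_mul_integral (hint n) (hint (n + 2)) (hint (n + 1))
    (hnonneg n) (hnonneg (n + 2))
    (ae_restrict_of_forall_mem measurableSet_Ioc fun x hx => sq_prod_range_succ_le hx.1.le n)

theorem cauchy2_product_inequality_general (l n k m : ℕ)
    (h1 : m ≤ k) (h2 : k ≤ n) (h4 : n - m ≤ m) :
    cauchy2 (l + m) * cauchy2 (l + (n - m)) ≤ cauchy2 (l + k) * cauchy2 (l + (n - k)) := by
  have key := add_mul_le_mul_add_of_logConvex cauchy2_pos sq_cauchy2_succ_le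
    (show l + (n - k) ≤ l + m by omega) (k - m)
  rwa [show l + (n - k) + (k - m) = l + (n - m) by omega, show l + m + (k - m) = l + k by omega,
    mul_comm, mul_comm (cauchy2 (l + (n - k)))] at key

theorem cauchy2_product_inequality (l n k m : ℕ)
    (h1 : m ≤ k) (h2 : k ≤ n) (h3 : n - k ≤ k) (h4 : n - m ≤ m) :
    cauchy2 (l + m) * cauchy2 (l + (n - m)) ≤ cauchy2 (l + k) * cauchy2 (l + (n - k)) :=
  cauchy2_product_inequality_general l n k m h1 h2 h4
end

section
/- Let m ≥ 1 and let a_1, …, a_m be nonnegative integers. Then the m×m determinant det[c_{a_i+a_j}/(a_i+a_j)!] is nonnegative. -/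
open MeasureTheory Real Nat

/-! For `0 < x < 1`, the Beta integral writes `(x)ₙ / n! = x(x+1)⋯(x+n-1) / n!` as
`(Γ(x) Γ(1-x))⁻¹ ∫₀¹ tⁿ t^(x-1) (1-t)^(-x) dt`, the `n`-th moment of a positive weight. Hence
`∑ᵢⱼ vᵢ vⱼ (x)_{aᵢ+aⱼ} / (aᵢ+aⱼ)!` is a weighted integral of `(∑ᵢ vᵢ t^aᵢ)² ≥ 0`. Integrating over
`x ∈ (0,1)` shows that the matrix `(c_{aᵢ+aⱼ} / (aᵢ+aⱼ)!)` is positive semidefinite. -/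

open Set Finset

lemma Real.Gamma_add_nat_eq_prod_mul {x : ℝ} (hx : ∀ k : ℕ, x + k ≠ 0) (n : ℕ) :
    Gamma (x + n) = (∏ i ∈ range n, (x + i)) * Gamma x := by
  induction n with
  | zero => simp
  | succ n ih =>
    rw [Nat.cast_succ, ← add_assoc, Real.Gamma_add_one (hx n), ih, prod_range_succ]
    ring

section Beta

variable {u v : ℝ}

lemma ofReal_rpow_mul_one_sub_rpow {t : ℝ} (ht : t ∈ Ioo (0 : ℝ) 1) :
    ((t ^ (u - 1) * (1 - t) ^ (v - 1) : ℝ) : ℂ) =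
      (t : ℂ) ^ ((u : ℂ) - 1) * (1 - (t : ℂ)) ^ ((v : ℂ) - 1) := by
  rw [Complex.ofReal_mul, Complex.ofReal_cpow ht.1.le, Complex.ofReal_cpow (sub_nonneg.2 ht.2.le)]
  push_cast
  rfl

lemma integrableOn_rpow_mul_one_sub_rpow (hu : 0 < u) (hv : 0 < v) :
    IntegrableOn (fun t : ℝ => t ^ (u - 1) * (1 - t) ^ (v - 1)) (Ioo 0 1) := by
  have h := Complex.betaIntegral_convergent (u := u) (v := v) (by simpa) (by simpa)
  rw [intervalIntegrable_iff_integrableOn_Ioo_of_le zero_le_one] at h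
  simpa [IntegrableOn] using
    (h.congr_fun (fun t ht => (ofReal_rpow_mul_one_sub_rpow ht).symm) measurableSet_Ioo).re

lemma integral_rpow_mul_one_sub_rpow (hu : 0 < u) (hv : 0 < v) :
    ∫ t in Ioo (0 : ℝ) 1, t ^ (u - 1) * (1 - t) ^ (v - 1) =
      Gamma u * Gamma v / Gamma (u + v) := by
  have hbeta := Complex.Gamma_mul_Gamma_eq_betaIntegral (s := u) (t := v) (by simpa) (by simpa)
  rw [Complex.betaIntegral, intervalIntegral.integral_of_le zero_le_one,
    integral_Ioc_eq_integral_Ioo,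
    ← setIntegral_congr_fun measurableSet_Ioo (fun t ht => ofReal_rpow_mul_one_sub_rpow ht),
    integral_complex_ofReal, ← Complex.ofReal_add, Complex.Gamma_ofReal, Complex.Gamma_ofReal,
    Complex.Gamma_ofReal] at hbeta
  rw [eq_div_iff (Gamma_pos_of_pos (by linarith)).ne', mul_comm]
  exact_mod_cast hbeta.symm

end Beta

lemma sum_mul_setIntegral_mul_pow_add_nonneg {ι : Type*} [Fintype ι] {μ : Measure ℝ}
    {s : Set ℝ} (hs : MeasurableSet s) {w : ℝ → ℝ} (hw : ∀ t ∈ s, 0 ≤ w t)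
    (hint : ∀ n : ℕ, IntegrableOn (fun t => w t * t ^ n) s μ) (a : ι → ℕ) (v : ι → ℝ) :
    0 ≤ ∑ i, ∑ j, v i * v j * ∫ t in s, w t * t ^ (a i + a j) ∂μ := by
  have hsq (t : ℝ) :
      ∑ i, ∑ j, v i * v j * (w t * t ^ (a i + a j)) = w t * (∑ i, v i * t ^ a i) ^ 2 := by
    rw [sq, sum_mul_sum, mul_sum]
    refine sum_congr rfl fun i _ => ?_
    rw [mul_sum]
    exact sum_congr rfl fun j _ => by ring
  have hint' (i j : ι) : IntegrableOn (fun t => v i * v j * (w t * t ^ (a i + a j))) s μ :=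
    (hint _).const_mul _
  calc 0 ≤ ∫ t in s, w t * (∑ i, v i * t ^ a i) ^ 2 ∂μ :=
        setIntegral_nonneg hs fun t ht => mul_nonneg (hw t ht) (sq_nonneg _)
    _ = _ := by
      simp_rw [← hsq, ← integral_const_mul]
      rw [integral_finsetSum _ fun i _ => integrable_finsetSum _ fun j _ => hint' i j]
      exact sum_congr rfl fun i _ => integral_finsetSum _ fun j _ => hint' i j

lemma rpow_mul_one_sub_rpow_mul_pow {x t : ℝ} (ht : 0 < t) (n : ℕ) :
    t ^ (x - 1) * (1 - t) ^ (-x) * t ^ n = t ^ (x + n - 1) * (1 - t) ^ (1 - x - 1) := by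
  rw [← rpow_natCast, mul_right_comm, ← rpow_add ht, sub_add_eq_add_sub, sub_sub_cancel_left]

lemma prod_add_div_factorial_eq_integral {x : ℝ} (hx : x ∈ Ioo (0 : ℝ) 1) (n : ℕ) :
    (∏ i ∈ range n, (x + i)) / n ! =
      (Gamma x * Gamma (1 - x))⁻¹ *
        ∫ t in Ioo (0 : ℝ) 1, t ^ (x - 1) * (1 - t) ^ (-x) * t ^ n := by
  have hx0 : 0 < x := hx.1
  have h1x : 0 < 1 - x := sub_pos.2 hx.2
  have hΓx := Gamma_pos_of_pos hx0
  have hΓ1x := Gamma_pos_of_pos h1x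
  rw [setIntegral_congr_fun measurableSet_Ioo fun t ht => rpow_mul_one_sub_rpow_mul_pow ht.1 n,
    integral_rpow_mul_one_sub_rpow (by positivity) h1x, show x + n + (1 - x) = n + 1 by ring,
    Gamma_nat_eq_factorial, Gamma_add_nat_eq_prod_mul fun k => by positivity]
  field_simp

lemma sum_mul_prod_add_div_factorial_nonneg {ι : Type*} [Fintype ι] {x : ℝ}
    (hx : x ∈ Ioo (0 : ℝ) 1) (a : ι → ℕ) (v : ι → ℝ) :
    0 ≤ ∑ i, ∑ j, v i * v j * ((∏ k ∈ range (a i + a j), (x + k)) / (a i + a j)!) := by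
  have hΓ : 0 < Gamma x * Gamma (1 - x) :=
    mul_pos (Gamma_pos_of_pos hx.1) (Gamma_pos_of_pos (sub_pos.2 hx.2))
  simp_rw [prod_add_div_factorial_eq_integral hx, mul_left_comm _ (Gamma x * Gamma (1 - x))⁻¹,
    ← mul_sum]
  refine mul_nonneg (inv_nonneg.2 hΓ.le)
    (sum_mul_setIntegral_mul_pow_add_nonneg measurableSet_Ioo ?_ ?_ a v)
  · exact fun t ht => mul_nonneg (rpow_nonneg ht.1.le _) (rpow_nonneg (sub_pos.2 ht.2).le _)
  · exact fun n =>
      (integrableOn_rpow_mul_one_sub_rpow (by linarith [hx.1]) (sub_pos.2 hx.2)).congr_fun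
        (fun t ht => (rpow_mul_one_sub_rpow_mul_pow ht.1 n).symm) measurableSet_Ioo

lemma sum_mul_cauchy2_div_factorial_nonneg {ι : Type*} [Fintype ι] (a : ι → ℕ) (v : ι → ℝ) :
    0 ≤ ∑ i, ∑ j, v i * v j * (cauchy2 (a i + a j) / (a i + a j)!) := by
  have hcauchy2 (n : ℕ) :
      cauchy2 n / n ! = ∫ x in Ioo (0 : ℝ) 1, (∏ k ∈ range n, (x + k)) / n ! := by
    rw [cauchy2, intervalIntegral.integral_of_le zero_le_one, integral_Ioc_eq_integral_Ioo,
      integral_div]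
  have hint (n : ℕ) (c : ℝ) :
      IntegrableOn (fun x : ℝ => c * ((∏ k ∈ range n, (x + k)) / n !)) (Ioo 0 1) :=
    (Continuous.integrableOn_Icc (by fun_prop)).mono_set Ioo_subset_Icc_self
  simp_rw [hcauchy2, ← integral_const_mul, ← integral_finsetSum _ fun j _ => hint _ _]
  rw [← integral_finsetSum _ fun i _ => integrable_finsetSum _ fun j _ => hint _ _]
  exact setIntegral_nonneg measurableSet_Ioo fun x hx =>
    sum_mul_prod_add_div_factorial_nonneg hx a v

theorem cauchy2_det_factorial_nonneg_general (m : ℕ) (a : Fin m → ℕ) :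
    0 ≤ Matrix.det (Matrix.of fun i j : Fin m =>
      cauchy2 (a i + a j) / ((a i + a j)! : ℝ)) := by
  refine Matrix.PosSemidef.det_nonneg (.of_dotProduct_mulVec_nonneg ?_ fun v => ?_)
  · exact Matrix.IsHermitian.ext fun i j => by simp [add_comm]
  · simp only [star_trivial, dotProduct, Matrix.mulVec, Matrix.of_apply, mul_sum]
    exact (sum_mul_cauchy2_div_factorial_nonneg a v).trans_eq
      (sum_congr rfl fun i _ => sum_congr rfl fun j _ => by ring)

theorem cauchy2_det_factorial_nonneg (m : ℕ) (hm : 1 ≤ m) (a : Fin m → ℕ) :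
    0 ≤ Matrix.det (Matrix.of fun i j : Fin m =>
      cauchy2 (a i + a j) / ((a i + a j)! : ℝ)) :=
  cauchy2_det_factorial_nonneg_general m a
end
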